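/- arXiv:1912.12672 — 6 statements merged into one kernel-verified Lean document; each statement's English description precedes it below -/
import Mathlib

section
/- Theorem 1 (convergence of the projected subgradient method): Let D : ℝ → ℝ be a convex function that attains its minimum over [0, ∞), and suppose there exists M > 0 such that every subgradient g of D at every point λ ≥ 0 satisfies |g| ≤ M. Let (h_t)_{t≥1} be a sequence of nonnegative step sizes with Σ_{t=1}^∞ h_t = ∞ and h_t → 0 as t → ∞. Define a sequence by λ(1) = 0 and λ(t+1) = max(λ(t) − h_t · g_t, 0), where each g_t is a subgradient of D at λ(t). Then lim_{t→∞} D(λ(t)) = min_{λ ≥ 0} D(λ). -/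
open Finset Filter

/-- `g` is a subgradient of `D` at `lam`: `D(λ') ≥ D(λ) + g (λ' - λ)` for all `λ'`. -/
def IsSubgradientAt (D : ℝ → ℝ) (g lam : ℝ) : Prop :=
  ∀ lam' : ℝ, D lam' ≥ D lam + g * (lam' - lam)

set_option maxHeartbeats 4000000 in
/-- Theorem 1: convergence of the projected subgradient method.  If `D` is convex,
attains its minimum over `[0, ∞)` at `lamStar`, all subgradients at points `λ ≥ 0` are
bounded by `M`, the nonnegative step sizes satisfy `∑ h t = ∞` and `h t → 0`, and the
iterates satisfy `λ(1) = 0` and `λ(t+1) = max (λ(t) - h t * g t) 0` with `g t` a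
subgradient of `D` at `λ(t)`, then `D(λ(t)) → min_{λ ≥ 0} D(λ)`. -/
theorem projected_subgradient_convergence
    (D : ℝ → ℝ) (hconv : ConvexOn ℝ Set.univ D)
    (lamStar : ℝ) (hstar : 0 ≤ lamStar)
    (hmin : ∀ lam : ℝ, 0 ≤ lam → D lamStar ≤ D lam)
    (M : ℝ) (hM : 0 < M)
    (hbound : ∀ lam : ℝ, 0 ≤ lam → ∀ g : ℝ, IsSubgradientAt D g lam → |g| ≤ M)
    (h : ℕ → ℝ) (hpos : ∀ t, 0 ≤ h t)
    (hdiv : Tendsto (fun n => ∑ t ∈ Finset.Icc 1 n, h t) atTop atTop)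
    (hto0 : Tendsto h atTop (nhds 0))
    (lam g : ℕ → ℝ)
    (hinit : lam 1 = 0)
    (hsub : ∀ t ≥ 1, IsSubgradientAt D (g t) (lam t))
    (hrec : ∀ t ≥ 1, lam (t + 1) = max (lam t - h t * g t) 0) :
    Tendsto (fun t => D (lam t)) atTop (nhds (D lamStar)) := by
  classical
  have hM0 : (0:ℝ) ≤ M := hM.le
  -- iterates stay nonnegative
  have hlam0 : ∀ t, 1 ≤ t → 0 ≤ lam t := by
    intro t ht
    obtain ⟨k, rfl⟩ := Nat.exists_eq_add_of_le ht
    cases k with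
    | zero => simp [hinit]
    | succ m =>
      rw [show 1 + (m + 1) = (1 + m) + 1 from by omega, hrec (1 + m) (by omega)]
      exact le_max_right _ _
  have hg : ∀ t, 1 ≤ t → |g t| ≤ M := fun t ht => hbound _ (hlam0 t ht) _ (hsub t ht)
  set r : ℕ → ℝ := fun t => |lam t - lamStar| with hr
  set e : ℕ → ℝ := fun t => D (lam t) - D lamStar with he
  have hr0 : ∀ t, 0 ≤ r t := by intro t; simp only [hr]; exact abs_nonneg _
  have he0 : ∀ t, 1 ≤ t → 0 ≤ e t := by
    intro t ht; simp only [he]; exact sub_nonneg.mpr (hmin _ (hlam0 t ht))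
  have heg : ∀ t, 1 ≤ t → e t ≤ g t * (lam t - lamStar) := by
    intro t ht
    have h1 := hsub t ht lamStar
    simp only [he]; nlinarith [h1]
  have heabs : ∀ t, 1 ≤ t → e t ≤ |g t| * r t := by
    intro t ht
    refine (heg t ht).trans ?_
    calc g t * (lam t - lamStar) ≤ |g t * (lam t - lamStar)| := le_abs_self _
      _ = |g t| * r t := by rw [abs_mul]
  have heM : ∀ t, 1 ≤ t → e t ≤ M * r t := fun t ht =>
    (heabs t ht).trans (mul_le_mul_of_nonneg_right (hg t ht) (hr0 t))
  -- key square inequality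
  have key1sq : ∀ t, 1 ≤ t → r (t + 1) ^ 2 ≤ (r t - h t * |g t|) ^ 2 := by
    intro t ht
    have hproj : r (t + 1) ≤ |lam t - h t * g t - lamStar| := by
      simp only [hr]
      rw [hrec t ht]
      calc |max (lam t - h t * g t) 0 - lamStar|
          = |max (lam t - h t * g t) 0 - max lamStar 0| := by rw [max_eq_left hstar]
        _ ≤ |lam t - h t * g t - lamStar| := abs_max_sub_max_le_abs _ _ _
    have hge : 0 ≤ g t * (lam t - lamStar) := (he0 t ht).trans (heg t ht)
    have hgr : g t * (lam t - lamStar) = |g t| * r t := by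
      simp only [hr]
      rw [← abs_mul, abs_of_nonneg hge]
    have hx2 : (lam t - lamStar) ^ 2 = r t ^ 2 := by simp only [hr]; rw [sq_abs]
    have hg2 : |g t| ^ 2 = g t ^ 2 := sq_abs _
    have hexp : (lam t - h t * g t - lamStar) ^ 2 = (r t - h t * |g t|) ^ 2 := by
      linear_combination hx2 - 2 * h t * hgr - h t ^ 2 * hg2
    calc r (t + 1) ^ 2 ≤ |lam t - h t * g t - lamStar| ^ 2 :=
          pow_le_pow_left₀ (hr0 _) hproj 2
      _ = (lam t - h t * g t - lamStar) ^ 2 := sq_abs _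
      _ = (r t - h t * |g t|) ^ 2 := hexp
  have key2 : ∀ t, 1 ≤ t → r (t + 1) ^ 2 ≤ r t ^ 2 - 2 * (h t * e t) + h t ^ 2 * M ^ 2 := by
    intro t ht
    have h1 := key1sq t ht
    have h2 : h t * e t ≤ h t * (|g t| * r t) :=
      mul_le_mul_of_nonneg_left (heabs t ht) (hpos t)
    have h3 : h t ^ 2 * |g t| ^ 2 ≤ h t ^ 2 * M ^ 2 :=
      mul_le_mul_of_nonneg_left (by nlinarith [abs_nonneg (g t), hg t ht]) (sq_nonneg _)
    nlinarith [h1, h2, h3]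
  -- function values change slowly
  have einc : ∀ t, 1 ≤ t → e (t + 1) ≤ e t + M ^ 2 * h t := by
    intro t ht
    have s1 := hsub (t + 1) (by omega) (lam t)
    have s2 : |lam (t + 1) - lam t| ≤ h t * M := by
      rw [hrec t ht]
      calc |max (lam t - h t * g t) 0 - lam t|
          = |max (lam t - h t * g t) 0 - max (lam t) 0| := by
            rw [max_eq_left (hlam0 t ht)]
        _ ≤ |lam t - h t * g t - lam t| := abs_max_sub_max_le_abs _ _ _
        _ = h t * |g t| := by
            rw [show lam t - h t * g t - lam t = -(h t * g t) from by ring, abs_neg,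
              abs_mul, abs_of_nonneg (hpos t)]
        _ ≤ h t * M := mul_le_mul_of_nonneg_left (hg t ht) (hpos t)
    have b1 : g (t + 1) * (lam (t + 1) - lam t) ≤ M * (h t * M) := by
      calc g (t + 1) * (lam (t + 1) - lam t) ≤ |g (t + 1) * (lam (t + 1) - lam t)| :=
            le_abs_self _
        _ = |g (t + 1)| * |lam (t + 1) - lam t| := abs_mul _ _
        _ ≤ M * (h t * M) :=
            mul_le_mul (hg (t + 1) (by omega)) s2 (abs_nonneg _) hM0
    simp only [he]
    nlinarith [s1, b1]
  -- main epsilon claim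
  have main : ∀ ε : ℝ, 0 < ε → ∃ N, ∀ t, N ≤ t → e t ≤ 3 * ε := by
    intro ε hε
    have hεM2 : (0:ℝ) < ε / M ^ 2 := by positivity
    obtain ⟨T₀, hT₀⟩ := Filter.eventually_atTop.mp (hto0.eventually_lt_const hεM2)
    set T := max T₀ 1 with hT
    have hT1 : 1 ≤ T := le_max_right _ _
    have hTh : ∀ t, T ≤ t → h t ≤ ε / M ^ 2 := fun t ht =>
      (hT₀ t (le_trans (le_max_left _ _) ht)).le
    have hThM : ∀ t, T ≤ t → h t * M ≤ ε / M := by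
      intro t ht
      calc h t * M ≤ (ε / M ^ 2) * M := mul_le_mul_of_nonneg_right (hTh t ht) hM0
        _ = ε / M := by field_simp
    have hThM2 : ∀ t, T ≤ t → M ^ 2 * h t ≤ ε := by
      intro t ht
      calc M ^ 2 * h t ≤ M ^ 2 * (ε / M ^ 2) :=
            mul_le_mul_of_nonneg_left (hTh t ht) (sq_nonneg M)
        _ = ε := by field_simp
    -- the quantity max (r t) (ε/M) is nonincreasing past T
    have mstep : ∀ t, T ≤ t → max (r (t + 1)) (ε / M) ≤ max (r t) (ε / M) := by
      intro t ht
      have h1t : 1 ≤ t := le_trans hT1 ht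
      have hx0 : 0 ≤ h t * |g t| := mul_nonneg (hpos t) (abs_nonneg _)
      have hxδ : h t * |g t| ≤ ε / M :=
        le_trans (mul_le_mul_of_nonneg_left (hg t h1t) (hpos t)) (hThM t ht)
      have h1 : abs (r t - h t * |g t|) ≤ max (r t) (ε / M) := by
        rw [abs_sub_le_iff]
        constructor
        · linarith [le_max_left (r t) (ε / M)]
        · linarith [le_max_right (r t) (ε / M), hr0 t]
      have h2 : r (t + 1) ^ 2 ≤ (max (r t) (ε / M)) ^ 2 := by
        calc r (t + 1) ^ 2 ≤ (r t - h t * |g t|) ^ 2 := key1sq t h1t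
          _ = abs (r t - h t * |g t|) ^ 2 := (sq_abs _).symm
          _ ≤ (max (r t) (ε / M)) ^ 2 := pow_le_pow_left₀ (abs_nonneg _) h1 2
      have h0m : (0:ℝ) ≤ max (r t) (ε / M) := le_trans (hr0 t) (le_max_left _ _)
      have h3 : r (t + 1) ≤ max (r t) (ε / M) := by nlinarith [hr0 (t + 1)]
      exact max_le h3 (le_max_right _ _)
    have mono : ∀ a b, T ≤ a → a ≤ b → max (r b) (ε / M) ≤ max (r a) (ε / M) := by
      intro a b hTa hab
      induction b, hab using Nat.le_induction with
      | base => exact le_rfl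
      | succ n hn ih => exact le_trans (mstep n (le_trans hTa hn)) ih
    -- single decrease step when e is large
    have step_dec : ∀ t, T ≤ t → ε < e t → r (t + 1) ^ 2 ≤ r t ^ 2 - ε * h t := by
      intro t ht hte
      have h1t : 1 ≤ t := le_trans hT1 ht
      have hk := key2 t h1t
      have hA : h t * ε ≤ h t * e t := mul_le_mul_of_nonneg_left hte.le (hpos t)
      have hB : h t ^ 2 * M ^ 2 ≤ h t * ε := by
        calc h t ^ 2 * M ^ 2 = h t * (M ^ 2 * h t) := by ring
          _ ≤ h t * ε := mul_le_mul_of_nonneg_left (hThM2 t ht) (hpos t)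
      linarith
    -- there are arbitrarily late times with small e
    have exG : ∀ N, T ≤ N → ∃ n, N ≤ n ∧ e n ≤ ε := by
      intro N hN
      by_contra hcon
      push_neg at hcon
      have dec : ∀ n, N ≤ n → r (n + 1) ^ 2 ≤ r N ^ 2 - ε * ∑ s ∈ Finset.Icc N n, h s := by
        intro n hn
        induction n, hn using Nat.le_induction with
        | base =>
          rw [Finset.Icc_self, Finset.sum_singleton]
          exact step_dec N hN (hcon N le_rfl)
        | succ n hn ih =>
          rw [Finset.sum_Icc_succ_top (by omega : N ≤ n + 1)]
          have hs := step_dec (n + 1) (by omega) (hcon (n + 1) (by omega))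
          linarith
      obtain ⟨n₀, hn₀⟩ := Filter.eventually_atTop.mp ((tendsto_atTop.mp hdiv)
        ((∑ s ∈ Finset.Ico 1 N, h s) + (r N ^ 2 / ε + 1)))
      obtain ⟨n, hn1, hn2⟩ : ∃ n, n₀ ≤ n ∧ N ≤ n :=
        ⟨max n₀ N, le_max_left _ _, le_max_right _ _⟩
      have hsplit : (∑ s ∈ Finset.Ico 1 N, h s) + ∑ s ∈ Finset.Ico N (n + 1), h s
          = ∑ s ∈ Finset.Ico 1 (n + 1), h s :=
        Finset.sum_Ico_consecutive _ (le_trans hT1 hN) (by omega)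
      have hIcc : ∑ s ∈ Finset.Ico N (n + 1), h s = ∑ s ∈ Finset.Icc N n, h s := by
        rw [Finset.Ico_add_one_right_eq_Icc]
      have h1n : ∑ s ∈ Finset.Icc 1 n, h s = ∑ s ∈ Finset.Ico 1 (n + 1), h s := by
        rw [Finset.Ico_add_one_right_eq_Icc]
      have hbig := hn₀ n hn1
      rw [h1n] at hbig
      have hsum : r N ^ 2 / ε + 1 ≤ ∑ s ∈ Finset.Icc N n, h s := by
        rw [← hIcc]; linarith
      have hmul : ε * (r N ^ 2 / ε + 1) ≤ ε * ∑ s ∈ Finset.Icc N n, h s :=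
        mul_le_mul_of_nonneg_left hsum hε.le
      have hcancel : ε * (r N ^ 2 / ε + 1) = r N ^ 2 + ε := by
        field_simp
      have hd := dec n hn2
      linarith [sq_nonneg (r (n + 1))]
    -- excursion lemma
    have exc : ∀ N n, T ≤ N → e N ≤ ε → N < n → 3 * ε < e n →
        max (r n) (ε / M) ^ 2 ≤ max (r N) (ε / M) ^ 2 - ε ^ 2 / M ^ 2 := by
      intro N n hTN heN hNn hen
      set P : ℕ → Prop := fun s => N ≤ s ∧ e s ≤ ε with hP
      set k := Nat.findGreatest P (n - 1) with hk
      have hPk : P k := Nat.findGreatest_spec (m := N) (by omega) ⟨le_rfl, heN⟩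
      have hkn : k ≤ n - 1 := Nat.findGreatest_le _
      have hkN : N ≤ k := hPk.1
      have hTk : T ≤ k := le_trans hTN hkN
      have h1k : 1 ≤ k := le_trans hT1 hTk
      have hgreat : ∀ s, k < s → s ≤ n - 1 → ε < e s := by
        intro s hs hs'
        by_contra hcon2
        push_neg at hcon2
        exact Nat.findGreatest_is_greatest hs hs' ⟨by omega, hcon2⟩
      have hek1 : e (k + 1) ≤ 2 * ε := by
        have h1 := einc k h1k
        have h2 := hThM2 k hTk
        have h3 : e k ≤ ε := hPk.2
        linarith
      have hkn' : k + 1 < n := by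
        by_contra hcon2
        have hn1 : n = k + 1 := by omega
        rw [hn1] at hen
        linarith
      have etel : ∀ j, k + 1 ≤ j →
          e j ≤ e (k + 1) + M ^ 2 * ∑ s ∈ Finset.Ico (k + 1) j, h s := by
        intro j hj
        induction j, hj using Nat.le_induction with
        | base => simp
        | succ j hj ih =>
          rw [Finset.sum_Ico_succ_top hj]
          have h1 := einc j (by omega)
          linarith
      have hsumlb : ε / M ^ 2 ≤ ∑ s ∈ Finset.Ico (k + 1) n, h s := by
        have h1 := etel n (by omega)
        rw [div_le_iff₀ (by positivity : (0:ℝ) < M ^ 2)]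
        nlinarith
      have rtel : ∀ j, k + 1 ≤ j → j ≤ n →
          r j ^ 2 ≤ r (k + 1) ^ 2 - ε * ∑ s ∈ Finset.Ico (k + 1) j, h s := by
        intro j hj
        induction j, hj using Nat.le_induction with
        | base => intro _; simp
        | succ j hj ih =>
          intro hjn
          have hje : ε < e j := hgreat j (by omega) (by omega)
          have hs := step_dec j (by omega) hje
          rw [Finset.sum_Ico_succ_top hj]
          have ihj := ih (by omega)
          linarith
      have hrn : r n ^ 2 ≤ r (k + 1) ^ 2 - ε ^ 2 / M ^ 2 := by
        have h1 := rtel n (by omega) le_rfl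
        have h2 : ε * (ε / M ^ 2) ≤ ε * ∑ s ∈ Finset.Ico (k + 1) n, h s :=
          mul_le_mul_of_nonneg_left hsumlb hε.le
        have h3 : ε * (ε / M ^ 2) = ε ^ 2 / M ^ 2 := by ring
        linarith
      have hrk1 : r (k + 1) ^ 2 ≤ max (r N) (ε / M) ^ 2 := by
        have h1 : r (k + 1) ≤ max (r (k + 1)) (ε / M) := le_max_left _ _
        have h2 : max (r (k + 1)) (ε / M) ≤ max (r N) (ε / M) := mono N (k + 1) hTN (by omega)
        have h0 : 0 ≤ r (k + 1) := hr0 _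
        calc r (k + 1) ^ 2 ≤ max (r (k + 1)) (ε / M) ^ 2 :=
              pow_le_pow_left₀ h0 h1 2 |>.trans (le_refl _) |>.trans
                (pow_le_pow_left₀ (le_trans h0 h1) (le_refl _) 2)
          _ ≤ max (r N) (ε / M) ^ 2 := pow_le_pow_left₀ (le_trans h0 h1) h2 2
      have hδrn : ε / M ≤ r n := by
        have h1 := heM n (by omega)
        rw [div_le_iff₀ hM]
        nlinarith
      rw [max_eq_left hδrn]
      linarith
    -- main contradiction
    by_contra hcon
    push_neg at hcon
    obtain ⟨N₀, hN₀, hN₀e⟩ := exG T le_rfl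
    have iter : ∀ j : ℕ, ∃ N, T ≤ N ∧ e N ≤ ε ∧
        max (r N) (ε / M) ^ 2 ≤ max (r N₀) (ε / M) ^ 2 - j * (ε ^ 2 / M ^ 2) := by
      intro j
      induction j with
      | zero => exact ⟨N₀, hN₀, hN₀e, by simp⟩
      | succ j ih =>
        obtain ⟨N, hTN, heN, hmN⟩ := ih
        obtain ⟨n, hNn, hne⟩ := hcon (N + 1)
        have hexc := exc N n hTN heN (by omega) hne
        obtain ⟨N', hnN', heN'⟩ := exG n (by omega)
        have hmono := mono n N' (by omega) hnN'
        have h0 : 0 ≤ max (r n) (ε / M) := le_trans (hr0 n) (le_max_left _ _)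
        have h0' : 0 ≤ max (r N') (ε / M) := le_trans (hr0 N') (le_max_left _ _)
        refine ⟨N', by omega, heN', ?_⟩
        have hsq2 : max (r N') (ε / M) ^ 2 ≤ max (r n) (ε / M) ^ 2 :=
          pow_le_pow_left₀ h0' hmono 2
        push_cast
        linarith [hexc, hmN]
    obtain ⟨j, hj⟩ := exists_nat_gt (max (r N₀) (ε / M) ^ 2 / (ε ^ 2 / M ^ 2))
    obtain ⟨N, hTN, -, hmN⟩ := iter j
    have hc : (0:ℝ) < ε ^ 2 / M ^ 2 := by positivity
    rw [div_lt_iff₀ hc] at hj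
    linarith [sq_nonneg (max (r N) (ε / M))]
  -- conclude
  rw [Metric.tendsto_atTop]
  intro ε' hε'
  obtain ⟨N, hN⟩ := main (ε' / 4) (by positivity)
  refine ⟨max N 1, fun t ht => ?_⟩
  have h1t : 1 ≤ t := le_trans (le_max_right _ _) ht
  have hNt : N ≤ t := le_trans (le_max_left _ _) ht
  have h3 := hN t hNt
  have h0 := he0 t h1t
  rw [Real.dist_eq]
  have h0' : (0:ℝ) ≤ D (lam t) - D lamStar := by simpa [he] using h0
  have h3' : D (lam t) - D lamStar ≤ 3 * (ε' / 4) := by simpa [he] using h3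
  rw [abs_of_nonneg h0']
  linarith
end

section
/- Theorem 2 (convergence of the projected stochastic subgradient method in probability): Let D : ℝ → ℝ be a convex function with a unique minimizer λ* over [0, ∞), and let M > 0. On a probability space with a filtration (F_t)_{t≥1}, let (λ(t))_{t≥1} be real random variables with λ(1) = 0 and each λ(t) measurable with respect to F_t, and let (G_t)_{t≥1} be real random variables with each G_t measurable with respect to F_{t+1}, |G_t| ≤ M almost surely, and such that the conditional expectation E[G_t | F_t] is almost surely a subgradient of D at λ(t). Let (h_t)_{t≥1} be nonnegative step sizes with Σ_{t=1}^∞ h_t = ∞ and Σ_{t=1}^∞ h_t² < ∞, and suppose λ(t+1) = max(λ(t) − h_t · G_t, 0) for all t. Then λ(t) converges to λ* in probability as t → ∞. -/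
/-!
With `e t = (λ t - λ*) ^ 2`, nonexpansiveness of the projection onto `[0, ∞)` and the
subgradient inequality at `λ*` give, for every `F t`-measurable set `B`,
`∫_B e (t+1) ≤ ∫_B e t - 2 h t ∫_B (D (λ t) - D λ*) + h t ^ 2 M ^ 2`.
On `B = Ω` this telescopes to `∑ h t 𝔼[D (λ t) - D λ*] < ∞`, so, as `∑ h t = ∞`, the expected
optimality gap is arbitrarily small at arbitrarily late times `t₀`. Convexity and uniqueness of
the minimizer bound the gap from below away from `λ*`, so by Markov's inequality `λ t₀` is close to
`λ*` outside a small set. On the `F t₀`-measurable set `B` where it is close, `∫_B e t` stays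
small for all `t ≥ t₀`, since the remaining increments add up to at most `M ^ 2 ∑_{s ≥ t₀} h s ^ 2`;
Markov's inequality once more concludes.
-/

open Finset Filter MeasureTheory ProbabilityTheory

open Topology

theorem ConvexOn.exists_pos_add_le_of_le_abs_sub {D : ℝ → ℝ} (hconv : ConvexOn ℝ (Set.Ici 0) D)
    {x₀ : ℝ} (hx₀ : 0 ≤ x₀) (hmin : ∀ x, 0 ≤ x → x ≠ x₀ → D x₀ < D x) {r : ℝ} (hr : 0 < r) :
    ∃ δ > 0, ∀ x, 0 ≤ x → r ≤ |x - x₀| → D x₀ + δ ≤ D x := by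
  have hup : D x₀ < D (x₀ + r) := hmin _ (by linarith) (by linarith)
  obtain ⟨δ, hδ, hδ_right, hδ_left⟩ : ∃ δ > 0,
      δ ≤ D (x₀ + r) - D x₀ ∧ (r ≤ x₀ → δ ≤ D (x₀ - r) - D x₀) := by
    by_cases hrx₀ : r ≤ x₀
    · have hdown : D x₀ < D (x₀ - r) := hmin _ (by linarith) (by linarith)
      exact ⟨_, lt_min (sub_pos.2 hup) (sub_pos.2 hdown), min_le_left _ _,
        fun _ => min_le_right _ _⟩
    · exact ⟨_, sub_pos.2 hup, le_rfl, fun h => absurd h hrx₀⟩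
  refine ⟨δ, hδ, fun x hx hxr => ?_⟩
  rcases le_abs'.1 hxr with hleft | hright
  · have := hconv.le_left_of_right_le'' hx hx₀ (by linarith) (by linarith)
      (hmin (x₀ - r) (by linarith) (by linarith)).le
    linarith [hδ_left (by linarith)]
  · have := hconv.le_right_of_left_le'' hx₀ hx (by linarith) (by linarith) hup.le
    linarith

theorem projected_iterate_mem_Icc {x g h : ℕ → ℝ} {M : ℝ} (hx₁ : x 1 = 0)
    (hrec : ∀ t ≥ 1, x (t + 1) = max (x t - h t * g t) 0) (hg : ∀ t, |g t| ≤ M)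
    (hh : ∀ t, 0 ≤ h t) :
    ∀ t ≥ 1, x t ∈ Set.Icc 0 (M * ∑ s ∈ Ico 1 t, h s) := by
  intro t ht
  induction t, ht using Nat.le_induction with
  | base => simp [hx₁]
  | succ t ht ih =>
    have hgt : -g t ≤ M := (neg_le_abs _).trans (hg t)
    rw [hrec t ht, sum_Ico_succ_top ht, mul_add]
    refine ⟨le_max_right _ _, max_le ?_ ?_⟩
    · nlinarith [ih.2, mul_le_mul_of_nonneg_left hgt (hh t)]
    · nlinarith [ih.1, ih.2, (abs_nonneg _).trans (hg t), hh t]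

theorem sq_max_sub_mul_sub_le {x c g h M : ℝ} (hc : 0 ≤ c) (hg : |g| ≤ M) :
    (max (x - h * g) 0 - c) ^ 2 ≤ (x - c) ^ 2 - 2 * h * ((x - c) * g) + h ^ 2 * M ^ 2 := by
  have hproj : (max (x - h * g) 0 - c) ^ 2 ≤ (x - h * g - c) ^ 2 := by
    rcases le_total 0 (x - h * g) with hpos | hneg
    · rw [max_eq_left hpos]
    · rw [max_eq_right hneg]
      nlinarith
  have hg2 : g ^ 2 ≤ M ^ 2 := sq_le_sq.2 (hg.trans (le_abs_self M))
  nlinarith [mul_le_mul_of_nonneg_left hg2 (sq_nonneg h)]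

theorem add_sum_Ico_le_of_forall_add_le {a u c : ℕ → ℝ} {t₀ : ℕ}
    (hstep : ∀ t ≥ t₀, a (t + 1) + u t ≤ a t + c t) :
    ∀ n ≥ t₀, a n + ∑ t ∈ Ico t₀ n, u t ≤ a t₀ + ∑ t ∈ Ico t₀ n, c t := by
  intro n hn
  induction n, hn using Nat.le_induction with
  | base => simp
  | succ n hn ih =>
    rw [sum_Ico_succ_top hn, sum_Ico_succ_top hn]
    linarith [hstep n hn]

theorem Summable.sum_Ico_le_tsum_nat_add {c : ℕ → ℝ} (hc : Summable c) (hc_nonneg : ∀ t, 0 ≤ c t)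
    (m n : ℕ) : ∑ t ∈ Ico m n, c t ≤ ∑' k, c (k + m) := by
  rw [sum_Ico_eq_sum_range]
  simp_rw [add_comm m]
  exact ((summable_nat_add_iff m).2 hc).sum_le_tsum _ fun k _ => hc_nonneg _

theorem frequently_le_of_sum_Icc_mul_le {h b : ℕ → ℝ} {C : ℝ} (hh : ∀ t, 0 ≤ h t)
    (hdiv : Tendsto (fun n => ∑ t ∈ Icc 1 n, h t) atTop atTop)
    (hbdd : ∀ n, ∑ t ∈ Icc 1 n, h t * b t ≤ C) {κ : ℝ} (hκ : 0 < κ) :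
    ∃ᶠ t in atTop, b t ≤ κ := by
  by_contra hcon
  obtain ⟨N, hN⟩ := eventually_atTop.1 (not_frequently.1 hcon)
  have hexcess : ∀ n ≥ N, ∑ t ∈ Icc 1 N, h t * (b t - κ) ≤ ∑ t ∈ Icc 1 n, h t * (b t - κ) := by
    intro n hn
    induction n, hn using Nat.le_induction with
    | base => exact le_rfl
    | succ n hn ih =>
      rw [sum_Icc_succ_top (by omega)]
      linarith [mul_nonneg (hh (n + 1)) (sub_nonneg.2 (not_le.1 (hN (n + 1) (by omega))).le)]
  obtain ⟨n, hn, hlarge⟩ := ((eventually_ge_atTop N).and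
    (hdiv.eventually_gt_atTop ((C - ∑ t ∈ Icc 1 N, h t * (b t - κ)) / κ))).exists
  have hsplit : ∑ t ∈ Icc 1 n, h t * (b t - κ)
      = ∑ t ∈ Icc 1 n, h t * b t - κ * ∑ t ∈ Icc 1 n, h t := by
    rw [mul_sum, ← sum_sub_distrib]
    exact sum_congr rfl fun t _ => by ring
  rw [div_lt_iff₀ hκ] at hlarge
  linarith [hexcess n hn, hbdd n]

section Probability

variable {Ω : Type*} {mΩ : MeasurableSpace Ω} {μ : Measure Ω}

theorem integrable_comp_of_ae_mem_Icc [IsFiniteMeasure μ] {φ : ℝ → ℝ} (hφ : Continuous φ)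
    {X : Ω → ℝ} (hX : AEMeasurable X μ) {a b : ℝ} (hXab : ∀ᵐ ω ∂μ, X ω ∈ Set.Icc a b) :
    Integrable (fun ω => φ (X ω)) μ := by
  obtain ⟨C, hC⟩ := isCompact_Icc.exists_bound_of_continuousOn hφ.continuousOn
  exact .of_bound (hφ.measurable.comp_aemeasurable hX).aestronglyMeasurable C
    (hXab.mono fun ω hω => hC _ hω)

theorem measure_le_ofReal_of_integral_le_mul [IsFiniteMeasure μ] {f : Ω → ℝ} (hf : 0 ≤ᵐ[μ] f)
    (hfi : Integrable f μ) {r θ : ℝ} (hr : 0 < r) (hθ : 0 ≤ θ) (hle : ∫ ω, f ω ∂μ ≤ r * θ) :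
    μ {ω | r ≤ f ω} ≤ ENNReal.ofReal θ := by
  rw [ENNReal.le_ofReal_iff_toReal_le (measure_ne_top _ _) hθ, ← measureReal_def]
  exact le_of_mul_le_mul_left ((mul_meas_ge_le_integral_of_nonneg hf hfi r).trans hle) hr

theorem setIntegral_le_setIntegral_mul_of_ae_le_mul_condExp {m : MeasurableSpace Ω}
    (hm : m ≤ mΩ) [SigmaFinite (μ.trim hm)] {f X G : Ω → ℝ} (hX : StronglyMeasurable[m] X)
    (hf : Integrable f μ) (hG : Integrable G μ) (hXG : Integrable (X * G) μ)
    (hle : f ≤ᵐ[μ] X * μ[G | m]) {B : Set Ω} (hB : MeasurableSet[m] B) :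
    ∫ ω in B, f ω ∂μ ≤ ∫ ω in B, (X * G) ω ∂μ := by
  have hpull : μ[X * G | m] =ᵐ[μ] X * μ[G | m] := condExp_mul_of_stronglyMeasurable_left hX hXG hG
  calc ∫ ω in B, f ω ∂μ ≤ ∫ ω in B, (X * μ[G | m]) ω ∂μ :=
        setIntegral_mono_ae hf.integrableOn (integrable_condExp.congr hpull).integrableOn hle
    _ = ∫ ω in B, μ[X * G | m] ω ∂μ := integral_congr_ae (ae_restrict_of_ae hpull.symm)
    _ = ∫ ω in B, (X * G) ω ∂μ := setIntegral_condExp hm hXG hB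

theorem setIntegral_sq_max_sub_mul_sub_le [IsProbabilityMeasure μ] {m : MeasurableSpace Ω}
    (hm : m ≤ mΩ) {D : ℝ → ℝ} (hD : Continuous D) {X G : Ω → ℝ} {a b c h M : ℝ}
    (hc : 0 ≤ c) (hh : 0 ≤ h) (hX : StronglyMeasurable[m] X)
    (hXab : ∀ᵐ ω ∂μ, X ω ∈ Set.Icc a b) (hG : AEStronglyMeasurable[mΩ] G μ)
    (hGM : ∀ᵐ ω ∂μ, |G ω| ≤ M) (hsub : ∀ᵐ ω ∂μ, IsSubgradientAt D (μ[G | m] ω) (X ω))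
    {B : Set Ω} (hB : MeasurableSet[m] B) :
    ∫ ω in B, (max (X ω - h * G ω) 0 - c) ^ 2 ∂μ ≤
      ∫ ω in B, (X ω - c) ^ 2 ∂μ - 2 * h * ∫ ω in B, (D (X ω) - D c) ∂μ + h ^ 2 * M ^ 2 := by
  have hXm : AEMeasurable X μ := (hX.mono hm).measurable.aemeasurable
  have hGM' : ∀ᵐ ω ∂μ, ‖G ω‖ ≤ M := hGM
  have hXc : Integrable (fun ω => X ω - c) μ :=
    integrable_comp_of_ae_mem_Icc (continuous_sub_right c) hXm hXab
  have hXc2 : Integrable (fun ω => (X ω - c) ^ 2) μ :=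
    integrable_comp_of_ae_mem_Icc (φ := fun x => (x - c) ^ 2) (by fun_prop) hXm hXab
  have hXcG : Integrable (fun ω => (X ω - c) * G ω) μ := hXc.mul_bdd hG hGM'
  have hdescent : ∫ ω in B, (D (X ω) - D c) ∂μ ≤ ∫ ω in B, (X ω - c) * G ω ∂μ := by
    refine setIntegral_le_setIntegral_mul_of_ae_le_mul_condExp hm (hX.sub stronglyMeasurable_const)
      (integrable_comp_of_ae_mem_Icc (φ := fun x => D x - D c) (by fun_prop) hXm hXab)
      ((integrable_const M).mono' hG hGM') hXcG (hsub.mono fun ω hω => ?_) hB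
    have := hω c
    simp only [Pi.mul_apply, Pi.sub_apply]
    linarith
  have hbound : Integrable (fun ω => (X ω - c) ^ 2 - 2 * h * ((X ω - c) * G ω) + h ^ 2 * M ^ 2) μ :=
    (hXc2.sub (hXcG.const_mul _)).add (integrable_const _)
  have hmono := integral_mono_of_nonneg (μ := μ.restrict B) (ae_of_all _ fun ω => sq_nonneg _)
    hbound.integrableOn (ae_restrict_of_ae (hGM.mono fun ω hω => sq_max_sub_mul_sub_le hc hω))
  have hexpand : ∫ ω in B, ((X ω - c) ^ 2 - 2 * h * ((X ω - c) * G ω) + h ^ 2 * M ^ 2) ∂μ =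
      ∫ ω in B, (X ω - c) ^ 2 ∂μ - 2 * h * ∫ ω in B, (X ω - c) * G ω ∂μ +
        μ.real B * (h ^ 2 * M ^ 2) := by
    rw [integral_add, integral_sub, integral_const_mul, setIntegral_const, smul_eq_mul]
    · exact hXc2.integrableOn
    · exact (hXcG.const_mul _).integrableOn
    · exact (hXc2.sub (hXcG.const_mul _)).integrableOn
    · exact integrableOn_const
  have hμB : μ.real B * (h ^ 2 * M ^ 2) ≤ h ^ 2 * M ^ 2 :=
    mul_le_of_le_one_left (by positivity) measureReal_le_one
  nlinarith [mul_le_mul_of_nonneg_left hdescent (by positivity : (0 : ℝ) ≤ 2 * h)]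

theorem tendsto_measure_setOf_le_of_forall_setIntegral_le [IsFiniteMeasure μ] {f : ℕ → Ω → ℝ}
    (hf : ∀ t ω, 0 ≤ f t ω) (hfi : ∀ᶠ t in atTop, Integrable (f t) μ) {r : ℝ} (hr : 0 < r)
    (hsmall : ∀ θ > 0, ∃ B, MeasurableSet B ∧ μ Bᶜ ≤ ENNReal.ofReal θ ∧
      ∀ᶠ t in atTop, ∫ ω in B, f t ω ∂μ ≤ r * θ) :
    Tendsto (fun t => μ {ω | r ≤ f t ω}) atTop (𝓝 0) := by
  rw [ENNReal.tendsto_nhds_zero]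
  intro η hη
  obtain ⟨θ, -, hθ, hθη⟩ := ENNReal.lt_iff_exists_real_btwn.1 (ENNReal.half_pos hη.ne')
  obtain ⟨B, hB, hBc, hint⟩ := hsmall θ (ENNReal.ofReal_pos.1 hθ)
  filter_upwards [hfi, hint] with t hft hle
  have hinside : μ ({ω | r ≤ f t ω} ∩ B) ≤ ENNReal.ofReal θ := by
    rw [← Measure.restrict_apply' hB]
    exact measure_le_ofReal_of_integral_le_mul (ae_of_all _ (hf t)) hft.integrableOn hr
      (ENNReal.ofReal_pos.1 hθ).le hle
  calc μ {ω | r ≤ f t ω} ≤ μ ({ω | r ≤ f t ω} ∩ B) + μ Bᶜ :=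
        (measure_le_inter_add_sdiff _ _ _).trans
          (add_le_add le_rfl (measure_mono (Set.sdiff_subset_compl _ _)))
    _ ≤ η / 2 + η / 2 := add_le_add (hinside.trans hθη.le) (hBc.trans hθη.le)
    _ = η := ENNReal.add_halves η

theorem tendsto_measure_setOf_le_of_setIntegral_descent [IsProbabilityMeasure μ]
    {F : Filtration ℕ mΩ} {e g : ℕ → Ω → ℝ} {h c : ℕ → ℝ} (he_meas : ∀ t, Measurable[F t] (e t))
    (he_nonneg : ∀ t ω, 0 ≤ e t ω) (he_int : ∀ t ≥ 1, Integrable (e t) μ)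
    (hg_int : ∀ t ≥ 1, Integrable (g t) μ) (hg_nonneg : ∀ t ≥ 1, 0 ≤ᵐ[μ] g t)
    (hgap : ∀ ρ > 0, ∃ δ > 0, ∀ t ≥ 1, ∀ᵐ ω ∂μ, ρ ≤ e t ω → δ ≤ g t ω)
    (hh : ∀ t, 0 ≤ h t) (hdiv : Tendsto (fun n => ∑ t ∈ Icc 1 n, h t) atTop atTop)
    (hc : Summable c) (hc_nonneg : ∀ t, 0 ≤ c t)
    (hstep : ∀ t ≥ 1, ∀ B, MeasurableSet[F t] B →
      ∫ ω in B, e (t + 1) ω ∂μ ≤ ∫ ω in B, e t ω ∂μ - 2 * h t * ∫ ω in B, g t ω ∂μ + c t)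
    {r : ℝ} (hr : 0 < r) :
    Tendsto (fun t => μ {ω | r ≤ e t ω}) atTop (𝓝 0) := by
  have hgap_small : ∀ κ > 0, ∃ᶠ t in atTop, 2 * ∫ ω, g t ω ∂μ ≤ κ := by
    refine fun κ hκ => frequently_le_of_sum_Icc_mul_le hh hdiv
      (C := ∫ ω, e 1 ω ∂μ + ∑' k, c (k + 1)) (fun n => ?_) hκ
    have htele := add_sum_Ico_le_of_forall_add_le (a := fun t => ∫ ω, e t ω ∂μ)
      (u := fun t => h t * (2 * ∫ ω, g t ω ∂μ)) (c := c) (t₀ := 1)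
      (fun t ht => by
        have := hstep t ht Set.univ MeasurableSet.univ
        simp only [Measure.restrict_univ] at this
        linarith) (n + 1) (by omega)
    have htail := hc.sum_Ico_le_tsum_nat_add hc_nonneg 1 (n + 1)
    rw [Ico_add_one_right_eq_Icc] at htele htail
    linarith [integral_nonneg (μ := μ) (f := e (n + 1)) (he_nonneg (n + 1))]
  refine tendsto_measure_setOf_le_of_forall_setIntegral_le he_nonneg
    (eventually_atTop.2 ⟨1, he_int⟩) hr fun θ hθ => ?_
  obtain ⟨δ, hδ, hδg⟩ := hgap (r * θ / 2) (by positivity)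
  obtain ⟨N, hN⟩ := eventually_atTop.1
    ((tendsto_sum_nat_add c).eventually (gt_mem_nhds (by positivity : 0 < r * θ / 2)))
  obtain ⟨t₀, hgt₀, ht₀⟩ :=
    ((hgap_small (2 * (δ * θ)) (by positivity)).and_eventually
      (eventually_ge_atTop (max N 1))).exists
  have ht₀1 : 1 ≤ t₀ := le_of_max_le_right ht₀
  let B := {ω | e t₀ ω < r * θ / 2}
  have hB : MeasurableSet[F t₀] B := measurableSet_lt (he_meas t₀) measurable_const
  refine ⟨B, F.le t₀ _ hB, ?_, ?_⟩
  · calc μ Bᶜ ≤ μ {ω | δ ≤ g t₀ ω} := measure_mono_ae <| by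
          filter_upwards [hδg t₀ ht₀1] with ω hω hωB using hω (not_lt.1 hωB)
      _ ≤ ENNReal.ofReal θ := measure_le_ofReal_of_integral_le_mul (hg_nonneg t₀ ht₀1)
          (hg_int t₀ ht₀1) hδ hθ.le (by linarith)
  · filter_upwards [eventually_ge_atTop t₀] with t ht
    have htele := add_sum_Ico_le_of_forall_add_le (a := fun t => ∫ ω in B, e t ω ∂μ)
      (u := fun t => 2 * h t * ∫ ω in B, g t ω ∂μ) (c := c)
      (fun s hs => by linarith [hstep s (ht₀1.trans hs) B (F.mono hs B hB)]) t ht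
    have hdescent : 0 ≤ ∑ s ∈ Ico t₀ t, 2 * h s * ∫ ω in B, g s ω ∂μ :=
      sum_nonneg fun s hs => mul_nonneg (by linarith [hh s]) (setIntegral_nonneg_ae
        (F.le t₀ _ hB) ((hg_nonneg s (ht₀1.trans (mem_Ico.1 hs).1)).mono fun ω hω _ => hω))
    have hstart : ∫ ω in B, e t₀ ω ∂μ ≤ r * θ / 2 := calc
      _ ≤ ‖∫ ω in B, e t₀ ω ∂μ‖ := Real.le_norm_self _
      _ ≤ r * θ / 2 * μ.real B := norm_setIntegral_le_of_norm_le_const (measure_lt_top μ B)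
          fun ω hω => (Real.norm_of_nonneg (he_nonneg t₀ ω)).trans_le (le_of_lt hω)
      _ ≤ r * θ / 2 := mul_le_of_le_one_right (by positivity) measureReal_le_one
    linarith [hc.sum_Ico_le_tsum_nat_add hc_nonneg t₀ t, hN t₀ (le_of_max_le_left ht₀)]

end Probability

theorem projected_stochastic_subgradient_convergence_in_probability_general
    {Ω : Type*} [mΩ : MeasurableSpace Ω] (μ : Measure Ω) [IsProbabilityMeasure μ]
    (D : ℝ → ℝ) (hconv : ConvexOn ℝ Set.univ D)
    (lamStar : ℝ) (hstar : 0 ≤ lamStar)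
    (hmin : ∀ lam : ℝ, 0 ≤ lam → lam ≠ lamStar → D lamStar < D lam)
    (M : ℝ)
    (F : Filtration ℕ mΩ)
    (lam G : ℕ → Ω → ℝ)
    (hinit : ∀ ω, lam 1 ω = 0)
    (hlam_meas : ∀ t, Measurable[F t] (lam t))
    (hG_meas : ∀ t, Measurable[F (t + 1)] (G t))
    (hG_bound : ∀ t, ∀ᵐ ω ∂μ, |G t ω| ≤ M)
    (hG_subgrad : ∀ t, ∀ᵐ ω ∂μ, IsSubgradientAt D ((μ[G t | F t]) ω) (lam t ω))
    (h : ℕ → ℝ) (hpos : ∀ t, 0 ≤ h t)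
    (hdiv : Tendsto (fun n => ∑ t ∈ Finset.Icc 1 n, h t) atTop atTop)
    (hsq : Summable (fun t => h t ^ 2))
    (hrec : ∀ t ≥ 1, ∀ ω, lam (t + 1) ω = max (lam t ω - h t * G t ω) 0) :
    ∀ ε > 0, Tendsto (fun t => μ {ω | |lam t ω - lamStar| > ε}) atTop (nhds 0) := by
  intro ε hε
  have hD : Continuous D := continuousOn_univ.1 (hconv.continuousOn isOpen_univ)
  have hlam_Icc : ∀ t ≥ 1, ∀ᵐ ω ∂μ, lam t ω ∈ Set.Icc 0 (M * ∑ s ∈ Ico 1 t, h s) :=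
    fun t ht => (ae_all_iff.2 hG_bound).mono fun ω hω =>
      projected_iterate_mem_Icc (x := (lam · ω)) (g := (G · ω)) (hinit ω)
        (fun s hs => hrec s hs ω) hω hpos t ht
  have hlam_aem (t : ℕ) : AEMeasurable (lam t) μ :=
    ((hlam_meas t).mono (F.le t) le_rfl).aemeasurable
  have hDmin (x : ℝ) (hx : 0 ≤ x) : D lamStar ≤ D x :=
    (eq_or_ne x lamStar).elim (fun hx => hx ▸ le_rfl) fun hx' => (hmin x hx hx').le
  have hgap : ∀ ρ > 0, ∃ δ > 0, ∀ t ≥ 1, ∀ᵐ ω ∂μ,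
      ρ ≤ (lam t ω - lamStar) ^ 2 → δ ≤ D (lam t ω) - D lamStar := fun ρ hρ => by
    obtain ⟨δ, hδ, hδD⟩ := (hconv.subset (Set.subset_univ _) (convex_Ici 0)
      ).exists_pos_add_le_of_le_abs_sub hstar hmin (Real.sqrt_pos.2 hρ)
    refine ⟨δ, hδ, fun t ht => (hlam_Icc t ht).mono fun ω hω hρω => ?_⟩
    linarith [hδD _ hω.1 ((Real.sqrt_le_sqrt hρω).trans_eq (Real.sqrt_sq_eq_abs _))]
  refine tendsto_of_tendsto_of_tendsto_of_le_of_le tendsto_const_nhds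
    (tendsto_measure_setOf_le_of_setIntegral_descent (F := F)
      (e := fun t ω => (lam t ω - lamStar) ^ 2) (c := fun t => h t ^ 2 * M ^ 2)
      (fun t => ((hlam_meas t).sub_const _).pow_const 2) (fun t ω => sq_nonneg _)
      (fun t ht => integrable_comp_of_ae_mem_Icc (φ := fun x => (x - lamStar) ^ 2) (by fun_prop)
        (hlam_aem t) (hlam_Icc t ht))
      (fun t ht => integrable_comp_of_ae_mem_Icc (φ := fun x => D x - D lamStar) (by fun_prop)
        (hlam_aem t) (hlam_Icc t ht))
      (fun t ht => (hlam_Icc t ht).mono fun ω hω => sub_nonneg.2 (hDmin _ hω.1))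
      hgap hpos hdiv (hsq.mul_right _) (fun t => by positivity) (fun t ht B hB => by
        simp_rw [hrec t ht]
        exact setIntegral_sq_max_sub_mul_sub_le (F.le t) hD hstar (hpos t)
          (hlam_meas t).stronglyMeasurable (hlam_Icc t ht)
          ((hG_meas t).mono (F.le _) le_rfl).aestronglyMeasurable (hG_bound t) (hG_subgrad t) hB)
      (pow_pos hε 2))
    (fun _ => bot_le) (fun t => measure_mono fun ω hω => ?_)
  exact (pow_le_pow_left₀ hε.le (le_of_lt hω) 2).trans_eq (sq_abs _)

/-- Theorem 2: convergence in probability of the projected stochastic subgradient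
method.  `D` is convex with unique minimizer `lamStar` over `[0, ∞)`; the iterates
start at `λ(1) = 0`, are adapted to the filtration `F`, and are updated by
`λ(t+1) = max (λ(t) - h t * G t) 0`, where `G t` is `F (t+1)`-measurable, bounded by
`M` a.s., and its conditional expectation given `F t` is a.s. a subgradient of `D`
at `λ(t)`; the nonnegative step sizes satisfy `∑ h t = ∞` and `∑ h t ^ 2 < ∞`.
Then `λ(t) → lamStar` in probability. -/
theorem projected_stochastic_subgradient_convergence_in_probability
    {Ω : Type*} [mΩ : MeasurableSpace Ω] (μ : Measure Ω) [IsProbabilityMeasure μ]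
    (D : ℝ → ℝ) (hconv : ConvexOn ℝ Set.univ D)
    (lamStar : ℝ) (hstar : 0 ≤ lamStar)
    (hmin : ∀ lam : ℝ, 0 ≤ lam → lam ≠ lamStar → D lamStar < D lam)
    (M : ℝ) (hM : 0 < M)
    (F : Filtration ℕ mΩ)
    (lam G : ℕ → Ω → ℝ)
    (hinit : ∀ ω, lam 1 ω = 0)
    (hlam_meas : ∀ t, Measurable[F t] (lam t))
    (hG_meas : ∀ t, Measurable[F (t + 1)] (G t))
    (hG_bound : ∀ t, ∀ᵐ ω ∂μ, |G t ω| ≤ M)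
    (hG_subgrad : ∀ t, ∀ᵐ ω ∂μ, IsSubgradientAt D ((μ[G t | F t]) ω) (lam t ω))
    (h : ℕ → ℝ) (hpos : ∀ t, 0 ≤ h t)
    (hdiv : Tendsto (fun n => ∑ t ∈ Finset.Icc 1 n, h t) atTop atTop)
    (hsq : Summable (fun t => h t ^ 2))
    (hrec : ∀ t ≥ 1, ∀ ω, lam (t + 1) ω = max (lam t ω - h t * G t ω) 0) :
    ∀ ε > 0, Tendsto (fun t => μ {ω | |lam t ω - lamStar| > ε}) atTop (nhds 0) :=
  projected_stochastic_subgradient_convergence_in_probability_general (mΩ := mΩ) μ D hconv lamStar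
    hstar hmin M F lam G hinit hlam_meas hG_meas hG_bound hG_subgrad h hpos hdiv hsq hrec
end

section
/- State-by-state decomposition of the dual function: For every λ ∈ ℝ, D(λ) = λ·N₂ + Σ_s f s · D_s(λ), where for each state s, D_s(λ) is the maximum of Σ_i v i · p s i · x_i + Σ_i (v i − λ) · y_i over all x, y : I → ℝ satisfying y_i ≤ p s i · (1 − x_i), Σ_i x_i ≤ N₁, 0 ≤ x_i ≤ 1, and y_i ≥ 0 for all i. -/
/-! Once the constant `λ N₂` is split off, the Lagrangian is the `f`-weighted sum of the
per-state objectives, and the feasibility constraints factor state by state. Maximising a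
nonnegatively weighted sum over a product of constraint sets is done coordinatewise, so the
maximum of the sum is the weighted sum of the per-state maxima. -/

open Finset

/-- Feasibility of a pair of scheduling variables `(x, y)`:
for all states `s` and packets `i`, `y s i ≤ p s i * (1 - x s i)`,
`∑ i, x s i ≤ N₁`, `0 ≤ x s i ≤ 1`, and `y s i ≥ 0`. -/
def Feasible {S I : Type*} [Fintype S] [Fintype I]
    (p : S → I → ℝ) (N₁ : ℕ) (x y : S → I → ℝ) : Prop :=
  (∀ s i, y s i ≤ p s i * (1 - x s i)) ∧
  (∀ s, ∑ i, x s i ≤ (N₁ : ℝ)) ∧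
  (∀ s i, 0 ≤ x s i ∧ x s i ≤ 1) ∧
  (∀ s i, 0 ≤ y s i)

/-- The Lagrangian `L(x, y, λ) = Q(x,y) - λ (∑_s f s ∑_i y s i - N₂)`. -/
def Lag {S I : Type*} [Fintype S] [Fintype I]
    (f : S → ℝ) (v : I → ℝ) (p : S → I → ℝ) (N₂ : ℕ)
    (x y : S → I → ℝ) (lam : ℝ) : ℝ :=
  (∑ s, f s * ∑ i, v i * (x s i * p s i + y s i))
    - lam * ((∑ s, f s * ∑ i, y s i) - (N₂ : ℝ))

theorem isGreatest_weighted_sum_of_forall_isGreatest {S α β : Type*} [Fintype S]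
    (P : S → α → β → Prop) (g : S → α → β → ℝ) {w : S → ℝ} (hw : ∀ s, 0 ≤ w s)
    {M : S → ℝ} (hM : ∀ s, IsGreatest {z | ∃ a b, P s a b ∧ g s a b = z} (M s)) :
    IsGreatest {z | ∃ (a : S → α) (b : S → β), (∀ s, P s (a s) (b s)) ∧
      ∑ s, w s * g s (a s) (b s) = z} (∑ s, w s * M s) := by
  constructor
  · choose a b hP hg using fun s => (hM s).1
    exact ⟨a, b, hP, by simp only [hg]⟩
  · rintro z ⟨a, b, hP, rfl⟩
    exact sum_le_sum fun s _ => mul_le_mul_of_nonneg_left ((hM s).2 ⟨a s, b s, hP s, rfl⟩) (hw s)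

section Scheduling

variable {S I : Type*} [Fintype S] [Fintype I]

def StateFeasible (p : S → I → ℝ) (N₁ : ℕ) (s : S) (x y : I → ℝ) : Prop :=
  (∀ i, y i ≤ p s i * (1 - x i)) ∧ (∑ i, x i ≤ (N₁ : ℝ)) ∧
  (∀ i, 0 ≤ x i ∧ x i ≤ 1) ∧ (∀ i, 0 ≤ y i)

def stateObjective (v : I → ℝ) (p : S → I → ℝ) (lam : ℝ) (s : S) (x y : I → ℝ) : ℝ :=
  (∑ i, v i * p s i * x i) + ∑ i, (v i - lam) * y i

theorem feasible_iff_forall_stateFeasible (p : S → I → ℝ) (N₁ : ℕ) (x y : S → I → ℝ) :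
    Feasible p N₁ x y ↔ ∀ s, StateFeasible p N₁ s (x s) (y s) := by
  simp only [Feasible, StateFeasible, forall_and]

theorem lag_eq_add_sum_stateObjective (f : S → ℝ) (v : I → ℝ) (p : S → I → ℝ) (N₂ : ℕ)
    (x y : S → I → ℝ) (lam : ℝ) :
    Lag f v p N₂ x y lam = lam * N₂ + ∑ s, f s * stateObjective v p lam s (x s) (y s) := by
  have hstate : ∀ s, f s * stateObjective v p lam s (x s) (y s)
      = f s * (∑ i, v i * (x s i * p s i + y s i)) - lam * (f s * ∑ i, y s i) := by
    intro s
    simp only [stateObjective, mul_sum, ← sum_sub_distrib, ← sum_add_distrib]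
    exact sum_congr rfl fun i _ => by ring
  rw [Lag, sum_congr rfl fun s _ => hstate s, sum_sub_distrib, ← mul_sum]
  ring

end Scheduling

theorem dual_state_decomposition_general
    {S I : Type*} [Fintype S] [Fintype I]
    (f : S → ℝ) (v : I → ℝ) (p : S → I → ℝ) (N₁ N₂ : ℕ)
    (hf : ∀ s, 0 ≤ f s)
    (D : ℝ → ℝ)
    (hD : ∀ lam : ℝ, IsGreatest
      {z : ℝ | ∃ x y : S → I → ℝ, Feasible p N₁ x y ∧ Lag f v p N₂ x y lam = z} (D lam))
    (Ds : S → ℝ → ℝ)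
    (hDs : ∀ (s : S) (lam : ℝ), IsGreatest
      {z : ℝ | ∃ x y : I → ℝ,
        (∀ i, y i ≤ p s i * (1 - x i)) ∧ (∑ i, x i ≤ (N₁ : ℝ)) ∧
        (∀ i, 0 ≤ x i ∧ x i ≤ 1) ∧ (∀ i, 0 ≤ y i) ∧
        (∑ i, v i * p s i * x i) + (∑ i, (v i - lam) * y i) = z} (Ds s lam)) :
    ∀ lam : ℝ, D lam = lam * (N₂ : ℝ) + ∑ s, f s * Ds s lam := by
  intro lam
  have hstate : ∀ s, IsGreatest
      {z | ∃ x y, StateFeasible p N₁ s x y ∧ stateObjective v p lam s x y = z} (Ds s lam) := by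
    simpa only [StateFeasible, stateObjective, and_assoc] using (hDs · lam)
  have hsum := isGreatest_weighted_sum_of_forall_isGreatest _ _ hf hstate
  have hdual : {z | ∃ x y, Feasible p N₁ x y ∧ Lag f v p N₂ x y lam = z}
      = (lam * N₂ + ·) '' {z | ∃ (x y : S → I → ℝ), (∀ s, StateFeasible p N₁ s (x s) (y s)) ∧
          ∑ s, f s * stateObjective v p lam s (x s) (y s) = z} := by
    ext z
    simp only [feasible_iff_forall_stateFeasible, lag_eq_add_sum_stateObjective, Set.mem_ofPred_eq,
      Set.mem_image]
    constructor
    · rintro ⟨x, y, hxy, rfl⟩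
      exact ⟨_, ⟨x, y, hxy, rfl⟩, rfl⟩
    · rintro ⟨_, ⟨x, y, hxy, rfl⟩, rfl⟩
      exact ⟨x, y, hxy, rfl⟩
  exact (hD lam).unique (hdual ▸ (monotone_id.const_add _).map_isGreatest hsum)

/-- State-by-state decomposition of the dual function:
`D(λ) = λ N₂ + ∑_s f s * D_s(λ)`, where `D_s(λ)` is the maximum of
`∑_i v i * p s i * x i + ∑_i (v i - λ) * y i` over the per-state feasible set. -/
theorem dual_state_decomposition
    {S I : Type*} [Fintype S] [Fintype I]
    (f : S → ℝ) (v : I → ℝ) (p : S → I → ℝ) (N₁ N₂ : ℕ)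
    (hf : ∀ s, 0 ≤ f s) (hfsum : ∑ s, f s = 1)
    (hv : ∀ i, 0 ≤ v i) (hp : ∀ s i, 0 ≤ p s i ∧ p s i ≤ 1)
    (D : ℝ → ℝ)
    (hD : ∀ lam : ℝ, IsGreatest
      {z : ℝ | ∃ x y : S → I → ℝ, Feasible p N₁ x y ∧ Lag f v p N₂ x y lam = z} (D lam))
    (Ds : S → ℝ → ℝ)
    (hDs : ∀ (s : S) (lam : ℝ), IsGreatest
      {z : ℝ | ∃ x y : I → ℝ,
        (∀ i, y i ≤ p s i * (1 - x i)) ∧ (∑ i, x i ≤ (N₁ : ℝ)) ∧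
        (∀ i, 0 ≤ x i ∧ x i ≤ 1) ∧ (∀ i, 0 ≤ y i) ∧
        (∑ i, v i * p s i * x i) + (∑ i, (v i - lam) * y i) = z} (Ds s lam)) :
    ∀ lam : ℝ, D lam = lam * (N₂ : ℝ) + ∑ s, f s * Ds s lam :=
  dual_state_decomposition_general f v p N₁ N₂ hf D hD Ds hDs
end

section
/- Closed form of the per-state dual subproblem (equation (18)): Fix a state s and λ ≥ 0, and define α s i = v i · p s i if v i < λ, and α s i = λ · p s i if v i ≥ λ. Then the maximum of Σ_i v i · p s i · x_i + Σ_i (v i − λ) · y_i over all x, y : I → ℝ with y_i ≤ p s i · (1 − x_i), Σ_i x_i ≤ N₁, 0 ≤ x_i ≤ 1, and y_i ≥ 0 equals (max over x : I → ℝ with Σ_i x_i ≤ N₁ and 0 ≤ x_i ≤ 1 of Σ_i α s i · x_i) + Σ_{i : v i ≥ λ} p s i · (v i − λ). -/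
open Finset

/-- Equation (18): with `α s i = v i * p s i` if `v i < lam` and `α s i = lam * p s i`
if `v i ≥ lam`, the per-state dual subproblem maximum equals the maximum of the
knapsack `∑ i, α s i * x i` plus the constant `∑_{i : v i ≥ lam} p s i * (v i - lam)`. -/
theorem per_state_dual_closed_form
    {I : Type*} [Fintype I]
    (v : I → ℝ) (hv : ∀ i, 0 ≤ v i)
    (ps : I → ℝ) (hp : ∀ i, 0 ≤ ps i ∧ ps i ≤ 1)
    (N₁ : ℕ) (lam : ℝ) (hlam : 0 ≤ lam)
    (α : I → ℝ) (hα : ∀ i, α i = if v i < lam then v i * ps i else lam * ps i)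
    (A B : ℝ)
    (hA : IsGreatest {z : ℝ | ∃ x y : I → ℝ,
        (∀ i, y i ≤ ps i * (1 - x i)) ∧ (∑ i, x i ≤ (N₁ : ℝ)) ∧
        (∀ i, 0 ≤ x i ∧ x i ≤ 1) ∧ (∀ i, 0 ≤ y i) ∧
        (∑ i, v i * ps i * x i) + (∑ i, (v i - lam) * y i) = z} A)
    (hB : IsGreatest {z : ℝ | ∃ x : I → ℝ,
        (∑ i, x i ≤ (N₁ : ℝ)) ∧ (∀ i, 0 ≤ x i ∧ x i ≤ 1) ∧
        (∑ i, α i * x i) = z} B) :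
    A = B + ∑ i ∈ Finset.univ.filter (fun i => lam ≤ v i), ps i * (v i - lam) := by
  have hC : ∑ i ∈ Finset.univ.filter (fun i => lam ≤ v i), ps i * (v i - lam)
      = ∑ i, (if lam ≤ v i then ps i * (v i - lam) else 0) := by
    rw [Finset.sum_filter]
  apply le_antisymm
  · -- A ≤ B + C
    obtain ⟨x, y, hy, hxs, hx01, hy0, hz⟩ := hA.1
    have hxB : (∑ i, α i * x i) ∈ {z : ℝ | ∃ x : I → ℝ,
        (∑ i, x i ≤ (N₁ : ℝ)) ∧ (∀ i, 0 ≤ x i ∧ x i ≤ 1) ∧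
        (∑ i, α i * x i) = z} := ⟨x, hxs, hx01, rfl⟩
    have hB' := hB.2 hxB
    have key : A ≤ (∑ i, α i * x i)
        + ∑ i, (if lam ≤ v i then ps i * (v i - lam) else 0) := by
      rw [← hz, ← Finset.sum_add_distrib, ← Finset.sum_add_distrib]
      apply Finset.sum_le_sum
      intro i _
      rcases lt_or_ge (v i) lam with h | h
      · rw [hα i, if_pos h, if_neg (not_le.mpr h)]
        have : (v i - lam) * y i ≤ 0 :=
          mul_nonpos_of_nonpos_of_nonneg (by linarith) (hy0 i)
        linarith
      · rw [hα i, if_neg (not_lt.mpr h), if_pos h]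
        have h1 : (v i - lam) * y i ≤ (v i - lam) * (ps i * (1 - x i)) :=
          mul_le_mul_of_nonneg_left (hy i) (by linarith)
        nlinarith
    linarith [hC ▸ key]
  · -- B + C ≤ A
    obtain ⟨x, hxs, hx01, hxB⟩ := hB.1
    set y : I → ℝ := fun i => if lam ≤ v i then ps i * (1 - x i) else 0 with hydef
    have hmem : (∑ i, v i * ps i * x i) + (∑ i, (v i - lam) * y i) ∈
        {z : ℝ | ∃ x y : I → ℝ,
        (∀ i, y i ≤ ps i * (1 - x i)) ∧ (∑ i, x i ≤ (N₁ : ℝ)) ∧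
        (∀ i, 0 ≤ x i ∧ x i ≤ 1) ∧ (∀ i, 0 ≤ y i) ∧
        (∑ i, v i * ps i * x i) + (∑ i, (v i - lam) * y i) = z} := by
      refine ⟨x, y, ?_, hxs, hx01, ?_, rfl⟩
      · intro i
        by_cases h : lam ≤ v i
        · simp [hydef, h]
        · simp only [hydef, if_neg h]
          exact mul_nonneg (hp i).1 (by linarith [(hx01 i).2])
      · intro i
        by_cases h : lam ≤ v i
        · simp only [hydef, if_pos h]
          exact mul_nonneg (hp i).1 (by linarith [(hx01 i).2])
        · simp [hydef, h]
    have hval : (∑ i, v i * ps i * x i) + (∑ i, (v i - lam) * y i)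
        = (∑ i, α i * x i)
          + ∑ i, (if lam ≤ v i then ps i * (v i - lam) else 0) := by
      rw [← Finset.sum_add_distrib, ← Finset.sum_add_distrib]
      apply Finset.sum_congr rfl
      intro i _
      by_cases h : lam ≤ v i
      · simp only [hydef, if_pos h, hα i, if_neg (not_lt.mpr h)]
        ring
      · simp only [hydef, if_neg h, hα i, if_pos (not_le.mp h)]
        ring
    have := hA.2 hmem
    rw [hval, hxB, ← hC] at this
    linarith
end

section
/- The offline algorithm's per-λ solution attains the dual function value: Fix λ ≥ 0 and assume N₁ ≤ |I|. For each state s, define α s i = v i · p s i if v i < λ and α s i = λ · p s i if v i ≥ λ, and let T_s ⊆ I be any subset with |T_s| = N₁ such that α s i ≥ α s j for every i ∈ T_s and j ∉ T_s. Define x* s i = 1 if i ∈ T_s and 0 otherwise, and y* s i = p s i · (1 − x* s i) if v i ≥ λ and y* s i = 0 otherwise. Then (x*, y*) is feasible and L(x*, y*, λ) = D(λ). -/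
open Finset

lemma sum_mul_le_top {I : Type*} [Fintype I] [DecidableEq I] (α : I → ℝ) (N₁ : ℕ)
    (hα0 : ∀ i, 0 ≤ α i) (T : Finset I) (hT : T.card = N₁)
    (hgr : ∀ i ∈ T, ∀ j ∉ T, α j ≤ α i)
    (x : I → ℝ) (hx0 : ∀ i, 0 ≤ x i) (hx1 : ∀ i, x i ≤ 1)
    (hxs : ∑ i, x i ≤ (N₁ : ℝ)) :
    ∑ i, x i * α i ≤ ∑ i ∈ T, α i := by
  rcases T.eq_empty_or_nonempty with hTe | hne
  · subst hTe
    simp only [Finset.card_empty] at hT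
    have hN : (N₁ : ℝ) = 0 := by rw [← hT]; simp
    have hsum0 : ∑ i, x i = 0 :=
      le_antisymm (by rw [hN] at hxs; exact hxs) (Finset.sum_nonneg fun i _ => hx0 i)
    have hz : ∀ i ∈ Finset.univ, x i = 0 :=
      (Finset.sum_eq_zero_iff_of_nonneg (fun i _ => hx0 i)).mp hsum0
    have : ∑ i, x i * α i = 0 :=
      Finset.sum_eq_zero fun i hi => by rw [hz i hi, zero_mul]
    simp [this]
  · set m := T.inf' hne α with hm
    have hmT : ∀ i ∈ T, m ≤ α i := fun i hi => Finset.inf'_le α hi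
    obtain ⟨i0, hi0, hmi0⟩ := Finset.exists_mem_eq_inf' hne α
    have hm0 : 0 ≤ m := by rw [hm, hmi0]; exact hα0 i0
    have hout : ∀ j ∉ T, α j ≤ m := fun j hj => by
      rw [hm, hmi0]; exact hgr i0 hi0 j hj
    have hsplit : ∑ i ∈ T, x i * α i + ∑ i ∈ Tᶜ, x i * α i = ∑ i, x i * α i :=
      Finset.sum_add_sum_compl T _
    have hsplitx : ∑ i ∈ T, x i + ∑ i ∈ Tᶜ, x i = ∑ i, x i :=
      Finset.sum_add_sum_compl T _
    have h1 : ∑ i ∈ Tᶜ, x i * α i ≤ (∑ i ∈ Tᶜ, x i) * m := by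
      rw [Finset.sum_mul]
      exact Finset.sum_le_sum fun i hi =>
        mul_le_mul_of_nonneg_left (hout i (Finset.mem_compl.mp hi)) (hx0 i)
    have hTsum : ∑ i ∈ T, (1 - x i) = (N₁ : ℝ) - ∑ i ∈ T, x i := by
      rw [Finset.sum_sub_distrib, Finset.sum_const, hT]; simp
    have h2 : ∑ i ∈ Tᶜ, x i ≤ ∑ i ∈ T, (1 - x i) := by linarith
    have h3 : (∑ i ∈ Tᶜ, x i) * m ≤ ∑ i ∈ T, (1 - x i) * m := by
      rw [← Finset.sum_mul]
      exact mul_le_mul_of_nonneg_right h2 hm0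
    have h4 : ∑ i ∈ T, (1 - x i) * m ≤ ∑ i ∈ T, (1 - x i) * α i :=
      Finset.sum_le_sum fun i hi =>
        mul_le_mul_of_nonneg_left (hmT i hi) (by linarith [hx1 i])
    have h5 : ∑ i ∈ T, x i * α i + ∑ i ∈ T, (1 - x i) * α i = ∑ i ∈ T, α i := by
      rw [← Finset.sum_add_distrib]
      exact Finset.sum_congr rfl fun i _ => by ring
    linarith

/-- The offline algorithm's per-`λ` solution attains the dual function value: choosing,
for each state `s`, the `N₁` packets with the largest `α s i` (where `α s i = v i * p s i`
if `v i < λ` and `α s i = λ * p s i` if `v i ≥ λ`) for proactive transmission, and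
`y* s i = p s i * (1 - x* s i)` exactly when `v i ≥ λ`, gives a feasible pair whose
Lagrangian value equals `D(λ)`. -/
theorem offline_solution_attains_dual
    {S I : Type*} [Fintype S] [Fintype I] [DecidableEq I]
    (f : S → ℝ) (v : I → ℝ) (p : S → I → ℝ) (N₁ N₂ : ℕ)
    (hf : ∀ s, 0 ≤ f s) (hfsum : ∑ s, f s = 1)
    (hv : ∀ i, 0 ≤ v i) (hp : ∀ s i, 0 ≤ p s i ∧ p s i ≤ 1)
    (hN₁ : N₁ ≤ Fintype.card I)
    (lam : ℝ) (hlam : 0 ≤ lam)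
    (D : ℝ → ℝ)
    (hD : ∀ lam' : ℝ, IsGreatest
      {z : ℝ | ∃ x y : S → I → ℝ, Feasible p N₁ x y ∧ Lag f v p N₂ x y lam' = z} (D lam'))
    (α : S → I → ℝ)
    (hα : ∀ s i, α s i = if v i < lam then v i * p s i else lam * p s i)
    (T : S → Finset I)
    (hTcard : ∀ s, (T s).card = N₁)
    (hTgreedy : ∀ s, ∀ i ∈ T s, ∀ j ∉ T s, α s j ≤ α s i)
    (xstar ystar : S → I → ℝ)
    (hxstar : ∀ s i, xstar s i = if i ∈ T s then 1 else 0)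
    (hystar : ∀ s i, ystar s i = if lam ≤ v i then p s i * (1 - xstar s i) else 0) :
    Feasible p N₁ xstar ystar ∧ Lag f v p N₂ xstar ystar lam = D lam := by
  have hx01 : ∀ s i, 0 ≤ xstar s i ∧ xstar s i ≤ 1 := by
    intro s i; rw [hxstar]; split_ifs <;> norm_num
  -- Feasibility of (xstar, ystar)
  have hfeas : Feasible p N₁ xstar ystar := by
    refine ⟨fun s i => ?_, fun s => ?_, hx01, fun s i => ?_⟩
    · rw [hystar]
      split_ifs
      · exact le_refl _
      · exact mul_nonneg (hp s i).1 (by linarith [(hx01 s i).2])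
    · have : ∑ i, xstar s i = ((T s).card : ℝ) := by
        rw [Finset.sum_congr rfl fun i _ => hxstar s i]
        simp [Finset.sum_ite_mem]
      rw [this, hTcard s]
    · rw [hystar]
      split_ifs
      · exact mul_nonneg (hp s i).1 (by linarith [(hx01 s i).2])
      · exact le_refl _
  -- nonnegativity of α
  have hα0 : ∀ s i, 0 ≤ α s i := by
    intro s i; rw [hα]; split_ifs
    · exact mul_nonneg (hv i) (hp s i).1
    · exact mul_nonneg hlam (hp s i).1
  -- the per-state optimal value
  set M : S → ℝ := fun s => ∑ i, max (v i - lam) 0 * p s i + ∑ i ∈ T s, α s i with hM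
  -- rewriting the Lagrangian
  have hLag : ∀ x y : S → I → ℝ, Lag f v p N₂ x y lam
      = (∑ s, f s * ∑ i, (v i * (x s i * p s i) + (v i - lam) * y s i)) + lam * N₂ := by
    intro x y
    have inner : ∀ s, f s * ∑ i, (v i * (x s i * p s i) + (v i - lam) * y s i)
        = f s * (∑ i, v i * (x s i * p s i + y s i)) - lam * (f s * ∑ i, y s i) := by
      intro s
      have : ∑ i, (v i * (x s i * p s i) + (v i - lam) * y s i)
          = (∑ i, v i * (x s i * p s i + y s i)) - lam * ∑ i, y s i := by
        rw [Finset.mul_sum, ← Finset.sum_sub_distrib]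
        exact Finset.sum_congr rfl fun i _ => by ring
      rw [this]; ring
    rw [Finset.sum_congr rfl fun s _ => inner s, Finset.sum_sub_distrib, ← Finset.mul_sum]
    unfold Lag; ring
  -- the per-state upper bound for any feasible pair
  have hper : ∀ x y : S → I → ℝ, Feasible p N₁ x y → ∀ s,
      ∑ i, (v i * (x s i * p s i) + (v i - lam) * y s i) ≤ M s := by
    intro x y hxy s
    obtain ⟨hy1, hxs, hx01', hy0⟩ := hxy
    have hterm : ∀ i, v i * (x s i * p s i) + (v i - lam) * y s i
        ≤ max (v i - lam) 0 * p s i + x s i * α s i := by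
      intro i
      have hps := (hp s i).1
      by_cases hvl : v i < lam
      · have hα' : α s i = v i * p s i := by rw [hα]; simp [hvl]
        have hmax : max (v i - lam) 0 = 0 := max_eq_right (by linarith)
        have hneg : (v i - lam) * y s i ≤ 0 :=
          mul_nonpos_of_nonpos_of_nonneg (by linarith) (hy0 s i)
        rw [hα', hmax]
        have : v i * (x s i * p s i) = x s i * (v i * p s i) := by ring
        linarith
      · push_neg at hvl
        have hα' : α s i = lam * p s i := by rw [hα]; simp [not_lt.mpr hvl]
        have hmax : max (v i - lam) 0 = v i - lam := max_eq_left (by linarith)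
        have hb : (v i - lam) * y s i ≤ (v i - lam) * (p s i * (1 - x s i)) :=
          mul_le_mul_of_nonneg_left (hy1 s i) (by linarith)
        have he : v i * (x s i * p s i) + (v i - lam) * (p s i * (1 - x s i))
            = (v i - lam) * p s i + x s i * (lam * p s i) := by ring
        rw [hα', hmax]
        linarith
    calc ∑ i, (v i * (x s i * p s i) + (v i - lam) * y s i)
        ≤ ∑ i, (max (v i - lam) 0 * p s i + x s i * α s i) :=
          Finset.sum_le_sum fun i _ => hterm i
      _ = ∑ i, max (v i - lam) 0 * p s i + ∑ i, x s i * α s i :=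
          Finset.sum_add_distrib
      _ ≤ M s := by
          have hMs : M s = ∑ i, max (v i - lam) 0 * p s i + ∑ i ∈ T s, α s i := rfl
          rw [hMs]
          have := sum_mul_le_top (α s) N₁ (hα0 s) (T s) (hTcard s) (hTgreedy s)
            (x s) (fun i => (hx01' s i).1) (fun i => (hx01' s i).2) (hxs s)
          linarith
  -- equality for (xstar, ystar)
  have heq : ∀ s, ∑ i, (v i * (xstar s i * p s i) + (v i - lam) * ystar s i) = M s := by
    intro s
    have hterm : ∀ i, v i * (xstar s i * p s i) + (v i - lam) * ystar s i
        = max (v i - lam) 0 * p s i + (if i ∈ T s then α s i else 0) := by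
      intro i
      by_cases hvl : v i < lam
      · have hα' : α s i = v i * p s i := by rw [hα]; simp [hvl]
        have hmax : max (v i - lam) 0 = 0 := max_eq_right (by linarith)
        rw [hystar, if_neg (not_le.mpr hvl), hα', hmax, hxstar]
        split_ifs <;> ring
      · push_neg at hvl
        have hα' : α s i = lam * p s i := by rw [hα]; simp [not_lt.mpr hvl]
        have hmax : max (v i - lam) 0 = v i - lam := max_eq_left (by linarith)
        rw [hystar, if_pos hvl, hα', hmax, hxstar]
        split_ifs <;> ring
    have hMs : M s = ∑ i, max (v i - lam) 0 * p s i + ∑ i ∈ T s, α s i := rfl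
    rw [Finset.sum_congr rfl fun i _ => hterm i, Finset.sum_add_distrib, hMs]
    congr 1
    simp [Finset.sum_ite_mem]
  -- conclude
  have hval : Lag f v p N₂ xstar ystar lam = (∑ s, f s * M s) + lam * N₂ := by
    rw [hLag xstar ystar]
    congr 1
    exact Finset.sum_congr rfl fun s _ => by rw [heq s]
  refine ⟨hfeas, ?_⟩
  have hmem : Lag f v p N₂ xstar ystar lam ∈
      {z : ℝ | ∃ x y : S → I → ℝ, Feasible p N₁ x y ∧ Lag f v p N₂ x y lam = z} :=
    ⟨xstar, ystar, hfeas, rfl⟩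
  have hle : Lag f v p N₂ xstar ystar lam ≤ D lam := (hD lam).2 hmem
  obtain ⟨x, y, hxy, hxyL⟩ := (hD lam).1
  have hge : D lam ≤ Lag f v p N₂ xstar ystar lam := by
    rw [← hxyL, hLag x y, hval]
    have : ∑ s, f s * ∑ i, (v i * (x s i * p s i) + (v i - lam) * y s i)
        ≤ ∑ s, f s * M s :=
      Finset.sum_le_sum fun s _ => mul_le_mul_of_nonneg_left (hper x y hxy s) (hf s)
    linarith
  linarith
end

section
/- Strong duality for the QoE-maximization linear program: Suppose N₂ > 0. Then the maximum of Q(x,y) over all feasible pairs (x,y) that additionally satisfy the bandwidth constraint Σ_s f s · Σ_i y s i ≤ N₂ (this maximum exists since the constraint set is compact and nonempty, as x = 0, y = 0 is feasible) equals the infimum over λ ≥ 0 of D(λ); that is, max primal QoE = inf_{λ ≥ 0} D(λ). -/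
open Finset

/-- Convex combinations of feasible pairs are feasible. -/
lemma feasible_combo {S I : Type*} [Fintype S] [Fintype I]
    (p : S → I → ℝ) (N₁ : ℕ) {x₁ y₁ x₂ y₂ : S → I → ℝ}
    (h₁ : Feasible p N₁ x₁ y₁) (h₂ : Feasible p N₁ x₂ y₂)
    {a b : ℝ} (ha : 0 ≤ a) (hb : 0 ≤ b) (hab : a + b = 1) :
    Feasible p N₁ (fun s i => a * x₁ s i + b * x₂ s i)
      (fun s i => a * y₁ s i + b * y₂ s i) := by
  obtain ⟨h11, h12, h13, h14⟩ := h₁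
  obtain ⟨h21, h22, h23, h24⟩ := h₂
  refine ⟨fun s i => ?_, fun s => ?_, fun s i => ⟨?_, ?_⟩, fun s i => ?_⟩ <;> dsimp only
  · have k1 := mul_le_mul_of_nonneg_left (h11 s i) ha
    have k2 := mul_le_mul_of_nonneg_left (h21 s i) hb
    have hpp : (a + b) * p s i = p s i := by rw [hab, one_mul]
    nlinarith [k1, k2, hpp]
  · have : ∑ i, (a * x₁ s i + b * x₂ s i)
        = a * ∑ i, x₁ s i + b * ∑ i, x₂ s i := by
      rw [Finset.sum_add_distrib, Finset.mul_sum, Finset.mul_sum]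
    rw [this]
    have k1 := mul_le_mul_of_nonneg_left (h12 s) ha
    have k2 := mul_le_mul_of_nonneg_left (h22 s) hb
    nlinarith [k1, k2]
  · exact add_nonneg (mul_nonneg ha (h13 s i).1) (mul_nonneg hb (h23 s i).1)
  · have k1 := mul_le_mul_of_nonneg_left (h13 s i).2 ha
    have k2 := mul_le_mul_of_nonneg_left (h23 s i).2 hb
    nlinarith [k1, k2]
  · exact add_nonneg (mul_nonneg ha (h14 s i)) (mul_nonneg hb (h24 s i))

lemma qoe_combo {S I : Type*} [Fintype S] [Fintype I]
    (f : S → ℝ) (v : I → ℝ) (p : S → I → ℝ) (a b : ℝ)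
    (x₁ y₁ x₂ y₂ : S → I → ℝ) :
    ∑ s, f s * ∑ i, v i * ((a * x₁ s i + b * x₂ s i) * p s i + (a * y₁ s i + b * y₂ s i))
      = a * (∑ s, f s * ∑ i, v i * (x₁ s i * p s i + y₁ s i))
        + b * (∑ s, f s * ∑ i, v i * (x₂ s i * p s i + y₂ s i)) := by
  simp only [Finset.mul_sum, ← Finset.sum_add_distrib]
  exact Finset.sum_congr rfl fun s _ => Finset.sum_congr rfl fun i _ => by ring

lemma band_combo {S I : Type*} [Fintype S] [Fintype I]
    (f : S → ℝ) (a b : ℝ) (y₁ y₂ : S → I → ℝ) :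
    ∑ s, f s * ∑ i, (a * y₁ s i + b * y₂ s i)
      = a * (∑ s, f s * ∑ i, y₁ s i) + b * (∑ s, f s * ∑ i, y₂ s i) := by
  simp only [Finset.mul_sum, ← Finset.sum_add_distrib]
  exact Finset.sum_congr rfl fun s _ => Finset.sum_congr rfl fun i _ => by ring

lemma feasible_zero {S I : Type*} [Fintype S] [Fintype I]
    (p : S → I → ℝ) (N₁ : ℕ) (hp : ∀ s i, 0 ≤ p s i ∧ p s i ≤ 1) :
    Feasible p N₁ (fun _ _ => (0:ℝ)) (fun _ _ => (0:ℝ)) := by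
  refine ⟨fun s i => by simpa using (hp s i).1, fun s => by simp, fun s i => by norm_num,
    fun s i => le_refl 0⟩

/-- Strong duality for the QoE-maximization linear program: if `N₂ > 0`, the maximum
of `Q(x,y)` over feasible pairs satisfying the bandwidth constraint
`∑_s f s ∑_i y s i ≤ N₂` equals `inf_{λ ≥ 0} D(λ)`. -/
theorem strong_duality_qoe
    {S I : Type*} [Fintype S] [Fintype I]
    (f : S → ℝ) (v : I → ℝ) (p : S → I → ℝ) (N₁ N₂ : ℕ)
    (hf : ∀ s, 0 ≤ f s) (hfsum : ∑ s, f s = 1)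
    (hv : ∀ i, 0 ≤ v i) (hp : ∀ s i, 0 ≤ p s i ∧ p s i ≤ 1)
    (hN₂ : 0 < N₂)
    (D : ℝ → ℝ)
    (hD : ∀ lam : ℝ, IsGreatest
      {z : ℝ | ∃ x y : S → I → ℝ, Feasible p N₁ x y ∧ Lag f v p N₂ x y lam = z} (D lam))
    (Qmax : ℝ)
    (hQmax : IsGreatest
      {z : ℝ | ∃ x y : S → I → ℝ, Feasible p N₁ x y ∧
        (∑ s, f s * ∑ i, y s i) ≤ (N₂ : ℝ) ∧
        (∑ s, f s * ∑ i, v i * (x s i * p s i + y s i)) = z} Qmax) :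
    Qmax = sInf (D '' Set.Ici (0 : ℝ)) := by
  classical
  have hn2 : (0:ℝ) < (N₂ : ℝ) := by exact_mod_cast hN₂
  obtain ⟨x₀, y₀, hfeas₀, hg₀, hQ₀⟩ := hQmax.1
  -- weak duality : Qmax is a lower bound of D on [0, ∞)
  have hlb : ∀ z ∈ D '' Set.Ici (0:ℝ), Qmax ≤ z := by
    rintro z ⟨lam, hlam, rfl⟩
    have hmem : Lag f v p N₂ x₀ y₀ lam ∈
        {z : ℝ | ∃ x y : S → I → ℝ, Feasible p N₁ x y ∧ Lag f v p N₂ x y lam = z} :=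
      ⟨x₀, y₀, hfeas₀, rfl⟩
    have h1 := (hD lam).2 hmem
    have h2 : Qmax ≤ Lag f v p N₂ x₀ y₀ lam := by
      unfold Lag
      rw [hQ₀]
      have : lam * ((∑ s, f s * ∑ i, y₀ s i) - (N₂:ℝ)) ≤ 0 :=
        mul_nonpos_of_nonneg_of_nonpos hlam (by linarith)
      linarith
    linarith
  have hbdd : BddBelow (D '' Set.Ici (0:ℝ)) := ⟨Qmax, hlb⟩
  have hne : (D '' Set.Ici (0:ℝ)).Nonempty := ⟨D 0, ⟨0, Set.self_mem_Ici, rfl⟩⟩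
  refine le_antisymm (le_csInf hne hlb) ?_
  -- main direction : sInf ≤ Qmax, via separation for every ε > 0
  refine le_of_forall_pos_le_add ?_
  intro ε hε
  set A : Set (ℝ × ℝ) := {w | ∃ x y : S → I → ℝ, Feasible p N₁ x y ∧
      (∑ s, f s * ∑ i, y s i) - (N₂:ℝ) ≤ w.1 ∧
      w.2 ≤ (∑ s, f s * ∑ i, v i * (x s i * p s i + y s i))} with hA
  have hconv : Convex ℝ A := by
    rintro w₁ ⟨x₁, y₁, hf₁, hg₁, hq₁⟩ w₂ ⟨x₂, y₂, hf₂, hg₂, hq₂⟩ a b ha hb hab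
    refine ⟨fun s i => a * x₁ s i + b * x₂ s i, fun s i => a * y₁ s i + b * y₂ s i,
      feasible_combo p N₁ hf₁ hf₂ ha hb hab, ?_, ?_⟩
    · show (∑ s, f s * ∑ i, (a * y₁ s i + b * y₂ s i)) - (N₂:ℝ) ≤ (a • w₁ + b • w₂).1
      rw [band_combo]
      have k1 := mul_le_mul_of_nonneg_left hg₁ ha
      have k2 := mul_le_mul_of_nonneg_left hg₂ hb
      simp only [Prod.fst_add, Prod.smul_fst, smul_eq_mul]
      nlinarith [k1, k2]
    · show (a • w₁ + b • w₂).2 ≤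
        ∑ s, f s * ∑ i, v i * ((a * x₁ s i + b * x₂ s i) * p s i + (a * y₁ s i + b * y₂ s i))
      rw [qoe_combo]
      have k1 := mul_le_mul_of_nonneg_left hq₁ ha
      have k2 := mul_le_mul_of_nonneg_left hq₂ hb
      simp only [Prod.snd_add, Prod.smul_snd, smul_eq_mul]
      nlinarith [k1, k2]
  -- membership in the interior of A from strict inequalities
  have hint : ∀ (w : ℝ × ℝ) (x y : S → I → ℝ), Feasible p N₁ x y →
      (∑ s, f s * ∑ i, y s i) - (N₂:ℝ) < w.1 →
      w.2 < (∑ s, f s * ∑ i, v i * (x s i * p s i + y s i)) → w ∈ interior A := by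
    intro w x y hfe h1 h2
    refine mem_interior.2 ⟨{u : ℝ × ℝ | (∑ s, f s * ∑ i, y s i) - (N₂:ℝ) < u.1 ∧
        u.2 < (∑ s, f s * ∑ i, v i * (x s i * p s i + y s i))}, ?_, ?_, ⟨h1, h2⟩⟩
    · rintro u ⟨hu1, hu2⟩
      exact ⟨x, y, hfe, hu1.le, hu2.le⟩
    · exact (isOpen_lt continuous_const continuous_fst).inter
        (isOpen_lt continuous_snd continuous_const)
  have hz0 : Feasible p N₁ (fun _ _ => (0:ℝ)) (fun _ _ => (0:ℝ)) := feasible_zero p N₁ hp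
  -- the point to separate
  have hzA : ((0:ℝ), Qmax + ε) ∉ A := by
    rintro ⟨x, y, hfe, hg, hq⟩
    simp only at hg hq
    have : (∑ s, f s * ∑ i, v i * (x s i * p s i + y s i)) ≤ Qmax :=
      hQmax.2 ⟨x, y, hfe, by linarith, rfl⟩
    linarith
  have hzint : ((0:ℝ), Qmax + ε) ∉ interior A := fun h => hzA (interior_subset h)
  obtain ⟨φ, hφ⟩ := geometric_hahn_banach_open_point hconv.interior isOpen_interior hzint
  set a : ℝ := φ (1, 0) with ha_def
  set b : ℝ := φ (0, 1) with hb_def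
  have hφ_eq : ∀ u r : ℝ, φ (u, r) = u * a + r * b := by
    intro u r
    have h : (u, r) = u • ((1:ℝ), (0:ℝ)) + r • ((0:ℝ), (1:ℝ)) := by
      simp [Prod.ext_iff]
    rw [h, map_add, map_smul, map_smul, smul_eq_mul, smul_eq_mul]
  have hC : φ (0, Qmax + ε) = (Qmax + ε) * b := by rw [hφ_eq]; ring
  -- abstract separation consequence for "south-east closed" points of A
  have habs : ∀ w : ℝ × ℝ, (∀ t : ℝ, 0 < t → ((w.1 + t, w.2 - t) : ℝ × ℝ) ∈ interior A) →
      w.1 * a + w.2 * b ≤ (Qmax + ε) * b := by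
    intro w hw
    have key : ∀ t : ℝ, 0 < t → w.1 * a + w.2 * b + t * (a - b) < (Qmax + ε) * b := by
      intro t ht
      have h := hφ _ (hw t ht)
      rw [hC, hφ_eq] at h
      nlinarith [h]
    by_contra hcon
    push_neg at hcon
    rcases le_or_gt (b - a) 0 with h | h
    · have := key 1 one_pos
      linarith
    · obtain ⟨t, ht, htv⟩ : ∃ t : ℝ, 0 < t ∧
          t * (b - a) = (w.1 * a + w.2 * b - (Qmax + ε) * b) / 2 :=
        ⟨(w.1 * a + w.2 * b - (Qmax + ε) * b) / (2 * (b - a)),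
          div_pos (by linarith) (by linarith), by field_simp⟩
      have := key t ht
      linarith
  -- the key separation inequality for feasible points
  have hsep : ∀ x y : S → I → ℝ, Feasible p N₁ x y →
      ((∑ s, f s * ∑ i, y s i) - (N₂:ℝ)) * a
        + (∑ s, f s * ∑ i, v i * (x s i * p s i + y s i)) * b ≤ (Qmax + ε) * b := by
    intro x y hfe
    refine habs ((∑ s, f s * ∑ i, y s i) - (N₂:ℝ),
      ∑ s, f s * ∑ i, v i * (x s i * p s i + y s i)) fun t ht => ?_
    exact hint _ x y hfe (by simp only; linarith) (by simp only; linarith)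
  -- the family of separation inequalities from the zero solution
  have hfam : ∀ u r : ℝ, 0 ≤ u → 0 ≤ r →
      (-(N₂:ℝ) + u) * a + (-r) * b ≤ (Qmax + ε) * b := by
    intro u r hu hr
    refine habs ((-(N₂:ℝ) + u, -r)) fun t ht => ?_
    refine hint _ (fun _ _ => 0) (fun _ _ => 0) hz0 ?_ ?_
    · simp only
      have : (∑ s, f s * ∑ i : I, (0:ℝ)) = 0 := by simp
      rw [this]; linarith
    · simp only
      have : (∑ s, f s * ∑ i, v i * ((0:ℝ) * p s i + 0)) = 0 := by simp
      rw [this]; linarith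
  have hbase : -(N₂:ℝ) * a ≤ (Qmax + ε) * b := by
    have := hfam 0 0 le_rfl le_rfl
    linarith
  -- b ≥ 0
  have hbnn : 0 ≤ b := by
    by_contra hbneg
    push_neg at hbneg
    obtain ⟨r, hr, hrv⟩ : ∃ r : ℝ, 0 ≤ r ∧
        r * (-b) = (Qmax + ε) * b + (N₂:ℝ) * a + 1 :=
      ⟨((Qmax + ε) * b + (N₂:ℝ) * a + 1) / (-b),
        le_of_lt (div_pos (by linarith) (by linarith)),
        div_mul_cancel₀ _ (ne_of_gt (by linarith : (0:ℝ) < -b))⟩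
    have := hfam 0 r le_rfl hr
    nlinarith [this, hrv]
  -- a ≤ 0
  have hanp : a ≤ 0 := by
    by_contra haneg
    push_neg at haneg
    obtain ⟨u, hu, huv⟩ : ∃ u : ℝ, 0 ≤ u ∧
        u * a = (Qmax + ε) * b + (N₂:ℝ) * a + 1 :=
      ⟨((Qmax + ε) * b + (N₂:ℝ) * a + 1) / a,
        le_of_lt (div_pos (by linarith) haneg),
        div_mul_cancel₀ _ (ne_of_gt haneg)⟩
    have := hfam u 0 hu le_rfl
    nlinarith [this, huv]
  -- b > 0 : otherwise φ would be nonpositive at the Slater interior point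
  have hbpos : 0 < b := by
    rcases eq_or_lt_of_le hbnn with h | h
    · exfalso
      have hmem : ((-(N₂:ℝ)/2, -1) : ℝ × ℝ) ∈ interior A := by
        refine hint _ (fun _ _ => 0) (fun _ _ => 0) hz0 ?_ ?_
        · have : (∑ s, f s * ∑ i : I, (0:ℝ)) = 0 := by simp
          rw [this]; simp only; linarith
        · have : (∑ s, f s * ∑ i, v i * ((0:ℝ) * p s i + 0)) = 0 := by simp
          rw [this]; simp only; linarith
      have h1 := hφ _ hmem
      rw [hC, hφ_eq] at h1
      rw [← h] at h1
      nlinarith [h1, mul_nonneg (neg_nonneg.2 hanp) hn2.le]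
    · exact h
  have hlamnn : (0:ℝ) ≤ -a / b := div_nonneg (by linarith) hbpos.le
  -- D (-a/b) ≤ Qmax + ε
  obtain ⟨x, y, hfe, hLag⟩ := (hD (-a / b)).1
  have hDle : D (-a / b) ≤ Qmax + ε := by
    rw [← hLag]
    have hs := hsep x y hfe
    unfold Lag
    generalize hq : (∑ s, f s * ∑ i, v i * (x s i * p s i + y s i)) = Qv at hs ⊢
    generalize hg : (∑ s, f s * ∑ i, y s i) = gv at hs ⊢
    have heq : Qv - (-a / b) * (gv - (N₂:ℝ)) = ((gv - (N₂:ℝ)) * a + Qv * b) / b := by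
      field_simp
      ring
    rw [heq, div_le_iff₀ hbpos]
    linarith
  calc sInf (D '' Set.Ici (0:ℝ)) ≤ D (-a / b) :=
        csInf_le hbdd ⟨-a / b, Set.mem_Ici.2 hlamnn, rfl⟩
    _ ≤ Qmax + ε := hDle
end
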